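/- (Theorem 3(ii), exactness on coordinate subspaces) Let g : ℝ^m → ℝ lie in H, let p ∈ ℝ^m, and let L be an integer with 1 ≤ L ≤ m. Let Q_L be the set of q ∈ {−2π/3, 0, 2π/3}^m with at most L non-zero entries, and define g̃ : ℝ^m → ℝ by g̃(θ) = Σ_{q ∈ Q_L} g(p + q)·K̃(p + q, θ). Then for every ϑ ∈ ℝ^m having at most L non-zero entries, g̃(p + ϑ) = g(p + ϑ). -/

import Mathlib

/-!
Every `g ∈ H` is a combination of the characters `z ↦ exp (i ωᵀz)`, `ω ∈ Ω`, and
`3^m K̃(x, z) = ∑_{τ ∈ Ω} exp (i τᵀ(x - z))`. Since `1 + 2 cos (2π d / 3) = 0` whenever `3 ∤ d`, the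
characters with frequencies in `{-2, …, 2}^m` are orthogonal on the grid `Q = (2π/3) Ω`, so the sum
over the full shifted grid `p + Q` reproduces every character, hence every `g ∈ H`, at every point.
If `ϑ` has at most `L` non-zero entries and `q ∈ Q` has more, some coordinate has `q j ≠ 0 = ϑ j`,
and the corresponding factor `1 + 2 cos (q j)` of `K̃ (p + q, p + ϑ)` vanishes: the terms
outside `Q_L` contribute nothing.
-/

open MeasureTheory Real Finset

noncomputable section

/-- `Ω = {-1,0,1}^m` as a finite set of integer vectors. -/
def Omega (m : ℕ) : Finset (Fin m → ℤ) := Finset.Icc (-1) 1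

/-- `ωᵀz = ∑ j, ω j * z j`. -/
def dotIZ {m : ℕ} (ω : Fin m → ℤ) (z : Fin m → ℝ) : ℝ := ∑ j, (ω j : ℝ) * z j

/-- A function `g : ℝ^m → ℝ` lies in `H` if it has a Fourier representation with
frequencies in `Ω = {-1,0,1}^m` and coefficients satisfying `c (-ω) = conj (c ω)`. -/
def IsInH (m : ℕ) (g : (Fin m → ℝ) → ℝ) : Prop :=
  ∃ c : (Fin m → ℤ) → ℂ,
    (∀ ω ∈ Omega m, c (-ω) = starRingEnd ℂ (c ω)) ∧
    ∀ z : Fin m → ℝ, (g z : ℂ) =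
      ∑ ω ∈ Omega m, c ω * Complex.exp (Complex.I * ((dotIZ ω z : ℝ) : ℂ))

/-- The kernel `K̃(x,z) = ∏ j, (1 + 2 cos (x j - z j)) / 3`. -/
def Ktilde (m : ℕ) (x z : Fin m → ℝ) : ℝ :=
  ∏ j, (1 + 2 * Real.cos (x j - z j)) / 3

/-- The grid `Q = {-2π/3, 0, 2π/3}^m` as a finite set of real vectors. -/
def Qgrid (m : ℕ) : Finset (Fin m → ℝ) :=
  (Omega m).image (fun ω j => 2 * π / 3 * (ω j : ℝ))

/-- The set of points of `Q` having at most `L` non-zero entries. -/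
def QgridL (m L : ℕ) : Finset (Fin m → ℝ) :=
  (Qgrid m).filter (fun q => (Finset.univ.filter (fun j => q j ≠ 0)).card ≤ L)

/-- The cube `[-π, π]^m`. -/
def cube (m : ℕ) : Set (Fin m → ℝ) := Set.pi Set.univ fun _ : Fin m => Set.Icc (-π) π

def gridPoint {m : ℕ} (ω : Fin m → ℤ) : Fin m → ℝ := fun j => 2 * π / 3 * (ω j : ℝ)

def expDot {m : ℕ} (ω : Fin m → ℤ) (z : Fin m → ℝ) : ℂ :=
  Complex.exp (Complex.I * (dotIZ ω z : ℂ))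

section

variable {m : ℕ}

lemma sum_Icc_exp_I_int_mul (t : ℝ) :
    ∑ s ∈ Finset.Icc (-1 : ℤ) 1, Complex.exp (Complex.I * ((s : ℝ) * t : ℝ))
      = ((1 + 2 * Real.cos t : ℝ) : ℂ) := by
  rw [show Finset.Icc (-1 : ℤ) 1 = {-1, 0, 1} from by decide,
    Finset.sum_insert (by decide), Finset.sum_insert (by decide), Finset.sum_singleton]
  push_cast
  rw [Complex.cos]
  ring_nf
  rw [Complex.exp_zero]
  ring

lemma one_add_two_cos_two_pi_div_three_mul_int_of_not_dvd {d : ℤ} (hd : ¬ (3 : ℤ) ∣ d) :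
    1 + 2 * Real.cos (2 * π / 3 * d) = 0 := by
  have hsplit : 2 * π / 3 * (d : ℝ) = 2 * π / 3 * ((d % 3 : ℤ) : ℝ) + (d / 3 : ℤ) * (2 * π) := by
    have h := Int.emod_add_mul_ediv d 3
    conv_lhs => rw [← h]
    push_cast
    ring
  rw [hsplit, Real.cos_add_int_mul_two_pi]
  have hr : d % 3 = 1 ∨ d % 3 = 2 := by omega
  rcases hr with hr | hr <;> rw [hr]
  · rw [show 2 * π / 3 * ((1 : ℤ) : ℝ) = π - π / 3 by push_cast; ring, Real.cos_pi_sub,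
      Real.cos_pi_div_three]
    norm_num
  · rw [show 2 * π / 3 * ((2 : ℤ) : ℝ) = π / 3 + π by push_cast; ring, Real.cos_add_pi,
      Real.cos_pi_div_three]
    norm_num

lemma Omega_eq_piFinset (m : ℕ) : Omega m = Fintype.piFinset fun _ => Finset.Icc (-1 : ℤ) 1 :=
  Pi.Icc_eq _ _

lemma mem_Omega {ω : Fin m → ℤ} : ω ∈ Omega m ↔ ∀ j, -1 ≤ ω j ∧ ω j ≤ 1 := by
  simp only [Omega_eq_piFinset, Fintype.mem_piFinset, Finset.mem_Icc]

lemma neg_mem_Omega {ω : Fin m → ℤ} (hω : ω ∈ Omega m) : -ω ∈ Omega m := by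
  rw [mem_Omega] at hω ⊢
  intro j
  have := hω j
  simp only [Pi.neg_apply]
  omega

lemma dotIZ_add_left (ω τ : Fin m → ℤ) (z : Fin m → ℝ) :
    dotIZ (ω + τ) z = dotIZ ω z + dotIZ τ z := by
  simp only [dotIZ, Pi.add_apply, Int.cast_add, add_mul, Finset.sum_add_distrib]

lemma dotIZ_neg_left (ω : Fin m → ℤ) (z : Fin m → ℝ) : dotIZ (-ω) z = -dotIZ ω z := by
  simp only [dotIZ, Pi.neg_apply, Int.cast_neg, neg_mul, Finset.sum_neg_distrib]

lemma dotIZ_add_right (ω : Fin m → ℤ) (x z : Fin m → ℝ) :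
    dotIZ ω (x + z) = dotIZ ω x + dotIZ ω z := by
  simp only [dotIZ, Pi.add_apply, mul_add, Finset.sum_add_distrib]

lemma dotIZ_neg_right (ω : Fin m → ℤ) (z : Fin m → ℝ) : dotIZ ω (-z) = -dotIZ ω z := by
  simp only [dotIZ, Pi.neg_apply, mul_neg, Finset.sum_neg_distrib]

lemma expDot_add_left (ω τ : Fin m → ℤ) (z : Fin m → ℝ) :
    expDot (ω + τ) z = expDot ω z * expDot τ z := by
  simp only [expDot, dotIZ_add_left, Complex.ofReal_add, mul_add, Complex.exp_add]

lemma expDot_add_right (ω : Fin m → ℤ) (x z : Fin m → ℝ) :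
    expDot ω (x + z) = expDot ω x * expDot ω z := by
  simp only [expDot, dotIZ_add_right, Complex.ofReal_add, mul_add, Complex.exp_add]

lemma expDot_neg_left (ω : Fin m → ℤ) (z : Fin m → ℝ) : expDot (-ω) z = expDot ω (-z) := by
  rw [expDot, expDot, dotIZ_neg_left, dotIZ_neg_right]

lemma expDot_zero_left (z : Fin m → ℝ) : expDot 0 z = 1 := by
  simp [expDot, dotIZ]

lemma expDot_eq_prod (ω : Fin m → ℤ) (z : Fin m → ℝ) :
    expDot ω z = ∏ j, Complex.exp (Complex.I * ((ω j : ℝ) * z j : ℝ)) := by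
  rw [expDot, dotIZ, Complex.ofReal_sum, Finset.mul_sum, Complex.exp_sum]

lemma Ktilde_eq_sum_expDot (x z : Fin m → ℝ) :
    (Ktilde m x z : ℂ) = (3 ^ m)⁻¹ * ∑ τ ∈ Omega m, expDot τ (x - z) := by
  simp only [expDot_eq_prod, Pi.sub_apply]
  rw [Omega_eq_piFinset, ← Finset.prod_univ_sum (fun _ => Finset.Icc (-1 : ℤ) 1)
    (fun j s => Complex.exp (Complex.I * ((s : ℝ) * (x j - z j) : ℝ)))]
  simp only [sum_Icc_exp_I_int_mul, Ktilde, Complex.ofReal_prod, Complex.ofReal_div,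
    Finset.prod_div_distrib, Finset.prod_const, Finset.card_univ, Fintype.card_fin]
  push_cast
  ring

lemma sum_expDot_gridPoint {d : Fin m → ℤ} (hd : ∀ j, -2 ≤ d j ∧ d j ≤ 2) :
    ∑ σ ∈ Omega m, expDot d (gridPoint σ) = if d = 0 then 3 ^ m else 0 := by
  have hfactor : ∀ j, ∑ s ∈ Finset.Icc (-1 : ℤ) 1,
      Complex.exp (Complex.I * ((d j : ℝ) * (2 * π / 3 * (s : ℝ)) : ℝ))
        = ((1 + 2 * Real.cos (2 * π / 3 * d j) : ℝ) : ℂ) := by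
    intro j
    rw [← sum_Icc_exp_I_int_mul]
    refine Finset.sum_congr rfl fun s _ => ?_
    ring_nf
  simp only [expDot_eq_prod, gridPoint]
  rw [Omega_eq_piFinset, ← Finset.prod_univ_sum (fun _ => Finset.Icc (-1 : ℤ) 1)
    (fun j s => Complex.exp (Complex.I * ((d j : ℝ) * (2 * π / 3 * (s : ℝ)) : ℝ)))]
  simp only [hfactor]
  split_ifs with h
  · norm_num [h]
  · obtain ⟨j, hj⟩ := Function.ne_iff.mp h
    have hdvd : ¬ (3 : ℤ) ∣ d j := by
      have := hd j
      simp only [Pi.zero_apply] at hj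
      omega
    refine Finset.prod_eq_zero (Finset.mem_univ j) ?_
    rw [one_add_two_cos_two_pi_div_three_mul_int_of_not_dvd hdvd, Complex.ofReal_zero]

lemma sum_expDot_mul_Ktilde {ω : Fin m → ℤ} (hω : ω ∈ Omega m) (p y : Fin m → ℝ) :
    ∑ σ ∈ Omega m, expDot ω (p + gridPoint σ) * Ktilde m (p + gridPoint σ) y = expDot ω y := by
  have hterm : ∀ σ τ, expDot ω (p + gridPoint σ) * expDot τ (p + gridPoint σ - y)
      = expDot (ω + τ) p * expDot τ (-y) * expDot (ω + τ) (gridPoint σ) := by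
    intro σ τ
    rw [sub_eq_add_neg, expDot_add_right τ _ (-y), ← mul_assoc, ← expDot_add_left,
      expDot_add_right]
    ring
  have horth : ∀ τ ∈ Omega m, ∑ σ ∈ Omega m, expDot (ω + τ) (gridPoint σ)
      = if τ = -ω then 3 ^ m else 0 := by
    intro τ hτ
    rw [sum_expDot_gridPoint]
    · simp only [eq_neg_iff_add_eq_zero, add_comm τ ω]
    intro j
    have := mem_Omega.mp hω j
    have := mem_Omega.mp hτ j
    simp only [Pi.add_apply]
    omega
  calc ∑ σ ∈ Omega m, expDot ω (p + gridPoint σ) * Ktilde m (p + gridPoint σ) y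
      = (3 ^ m)⁻¹ * ∑ τ ∈ Omega m, expDot (ω + τ) p * expDot τ (-y) *
          ∑ σ ∈ Omega m, expDot (ω + τ) (gridPoint σ) := by
        simp only [Finset.mul_sum]
        rw [Finset.sum_comm]
        refine Finset.sum_congr rfl fun σ _ => ?_
        rw [Ktilde_eq_sum_expDot, Finset.mul_sum, Finset.mul_sum]
        refine Finset.sum_congr rfl fun τ _ => ?_
        rw [← hterm]
        ring
    _ = (3 ^ m)⁻¹ * (expDot 0 p * expDot (-ω) (-y) * 3 ^ m) := by
        rw [Finset.sum_congr rfl fun τ hτ => by rw [horth τ hτ], Finset.sum_eq_single_of_mem _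
          (neg_mem_Omega hω) fun τ _ hτ => by rw [if_neg hτ, mul_zero], if_pos rfl, add_neg_cancel]
    _ = expDot ω y := by
        rw [expDot_zero_left, expDot_neg_left, neg_neg]
        field_simp

lemma sum_mul_Ktilde_of_isInH {g : (Fin m → ℝ) → ℝ} (hg : IsInH m g) (p y : Fin m → ℝ) :
    ∑ σ ∈ Omega m, g (p + gridPoint σ) * Ktilde m (p + gridPoint σ) y = g y := by
  obtain ⟨c, -, hc⟩ := hg
  have hc' : ∀ z, (g z : ℂ) = ∑ ω ∈ Omega m, c ω * expDot ω z := hc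
  apply Complex.ofReal_injective
  push_cast
  simp only [hc', Finset.sum_mul, mul_assoc]
  rw [Finset.sum_comm]
  simp only [← Finset.mul_sum]
  exact Finset.sum_congr rfl fun ω hω => by rw [sum_expDot_mul_Ktilde hω]

lemma gridPoint_injective : Function.Injective (gridPoint (m := m)) := fun ω τ h =>
  funext fun j => by
    have := congrFun h j
    simp only [gridPoint, mul_eq_mul_left_iff, Int.cast_inj] at this
    exact this.resolve_right (by positivity)

lemma gridPoint_ne_zero_iff {ω : Fin m → ℤ} {j : Fin m} : gridPoint ω j ≠ 0 ↔ ω j ≠ 0 := by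
  simp [gridPoint, Real.pi_ne_zero]

lemma QgridL_eq_image (L : ℕ) :
    QgridL m L = ((Omega m).filter fun ω => #{j | ω j ≠ 0} ≤ L).image gridPoint := by
  rw [QgridL, Qgrid, Finset.filter_image]
  simp only [← gridPoint.eq_def, gridPoint_ne_zero_iff]

lemma Ktilde_eq_zero_of_sub_eq {x z : Fin m → ℝ} {j : Fin m} {d : ℤ} (hd : ¬ (3 : ℤ) ∣ d)
    (h : x j - z j = 2 * π / 3 * d) : Ktilde m x z = 0 :=
  Finset.prod_eq_zero (Finset.mem_univ j) <| by
    rw [h, one_add_two_cos_two_pi_div_three_mul_int_of_not_dvd hd, zero_div]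

end

theorem stmt_13_general (m : ℕ) (g : (Fin m → ℝ) → ℝ) (hg : IsInH m g)
    (p : Fin m → ℝ) (L : ℕ)
    (ϑ : Fin m → ℝ) (hϑ : (Finset.univ.filter (fun j => ϑ j ≠ 0)).card ≤ L) :
    ∑ q ∈ QgridL m L, g (p + q) * Ktilde m (p + q) (p + ϑ) = g (p + ϑ) := by
  rw [QgridL_eq_image, Finset.sum_image gridPoint_injective.injOn, Finset.sum_filter_of_ne,
    sum_mul_Ktilde_of_isInH hg]
  intro ω hω hne
  by_contra hcard
  obtain ⟨j, hωj, hϑj⟩ := Finset.exists_mem_notMem_of_card_lt_card (hϑ.trans_lt (not_le.mp hcard))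
  simp only [Finset.mem_filter, Finset.mem_univ, true_and, not_not] at hωj hϑj
  have hdvd : ¬ (3 : ℤ) ∣ ω j := by
    have := mem_Omega.mp hω j
    omega
  refine hne (mul_eq_zero_of_right _ (Ktilde_eq_zero_of_sub_eq (j := j) hdvd ?_))
  simp only [Pi.add_apply, gridPoint, hϑj]
  ring

theorem stmt_13 (m : ℕ) (g : (Fin m → ℝ) → ℝ) (hg : IsInH m g)
    (p : Fin m → ℝ) (L : ℕ) (hL : 1 ≤ L) (hLm : L ≤ m)
    (ϑ : Fin m → ℝ) (hϑ : (Finset.univ.filter (fun j => ϑ j ≠ 0)).card ≤ L) :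
    ∑ q ∈ QgridL m L, g (p + q) * Ktilde m (p + q) (p + ϑ) = g (p + ϑ) :=
  stmt_13_general m g hg p L ϑ hϑ
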